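/- arXiv:2104.10352 — 3 statements merged into one kernel-verified Lean document; each statement's English description precedes it below -/
import Mathlib

section
/- Let M₁, M₂ ∈ Mat_{n×n}(ℝ) be symmetric positive definite, A ∈ Mat_{n×n}(ℝ), B ∈ Mat_{n×m}(ℝ), K ∈ Mat_{m×n}(ℝ), and 0 < β ≤ 1. Define W₁ := M₁⁻¹, W₂ := M₂⁻¹ and L := K W₁. Then the contraction condition (A + B K)ᵀ M₂ (A + B K) − (1 − β) M₁ ≺ 0 (i.e. (1 − β) M₁ − (A + B K)ᵀ M₂ (A + B K) is positive definite) holds if and only if the symmetric 2n×2n block matrix [[W₂, A W₁ + B L], [(A W₁ + B L)ᵀ, (1 − β) W₁]] is positive definite. -/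
/-!
Write `X = A + B K`, so that `A W₁ + B L = X W₁`. As `W₂ = M₂⁻¹` is positive definite, the block
matrix is positive definite iff its Schur complement `(1 - β) W₁ - (X W₁)ᵀ M₂ (X W₁)` is. That
complement is the congruence `W₁ ((1 - β) M₁ - Xᵀ M₂ X) W₁`, and congruence by the invertible
matrix `W₁` preserves positive definiteness.
-/

open Matrix

namespace Matrix

variable {m n R : Type*} [Fintype m] [Fintype n]

theorem PosDef.posDef_fromBlocks₁₁_iff [DecidableEq m] [CommRing R] [PartialOrder R] [StarRing R]
    [StarOrderedRing R] {A : Matrix m m R} (hA : A.PosDef) [Invertible A]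
    (B : Matrix m n R) (D : Matrix n n R) :
    (fromBlocks A B Bᴴ D).PosDef ↔ (D - Bᴴ * A⁻¹ * B).PosDef := by
  rw [posDef_iff_dotProduct_mulVec, posDef_iff_dotProduct_mulVec,
    IsHermitian.fromBlocks₁₁ _ _ hA.1]
  refine and_congr_right fun _ => ⟨fun h y hy => ?_, fun h z hz => ?_⟩
  · have hxy : -((A⁻¹ * B) *ᵥ y) ⊕ᵥ y ≠ 0 := fun h0 => hy (funext fun i => congrFun h0 (.inr i))
    have := h hxy
    rwa [dotProduct_mulVec, schur_complement_eq₁₁ B D _ _ hA.1, neg_add_cancel,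
      dotProduct_zero, zero_add, ← dotProduct_mulVec] at this
  · rw [dotProduct_mulVec, ← Sum.elim_comp_inl_inr z, schur_complement_eq₁₁ B D _ _ hA.1,
      ← dotProduct_mulVec, ← dotProduct_mulVec]
    by_cases hy : z ∘ Sum.inr = 0
    · have hx : z ∘ Sum.inl ≠ 0 := fun hx =>
        hz (by rw [← Sum.elim_comp_inl_inr z, hx, hy]; exact Sum.elim_zero_zero)
      rw [hy, mulVec_zero, add_zero, star_zero, zero_dotProduct, add_zero]
      exact hA.dotProduct_mulVec_pos hx
    · exact add_pos_of_nonneg_of_pos (hA.posSemidef.dotProduct_mulVec_nonneg _) (h hy)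

variable [DecidableEq n]

theorem IsHermitian.star_inv_mul_smul_sub_mul_inv [CommRing R] [StarRing R]
    {M₁ : Matrix n n R} (hM₁ : M₁.IsHermitian) (h : IsUnit M₁.det) (c : R)
    (X : Matrix m n R) (M₂ : Matrix m m R) :
    star M₁⁻¹ * (c • M₁ - Xᴴ * M₂ * X) * M₁⁻¹ =
      c • M₁⁻¹ - (X * M₁⁻¹)ᴴ * M₂ * (X * M₁⁻¹) := by
  rw [star_eq_conjTranspose, conjTranspose_nonsing_inv, hM₁.eq, mul_sub, sub_mul,
    conjTranspose_mul, conjTranspose_nonsing_inv, hM₁.eq, Matrix.mul_smul, Matrix.smul_mul,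
    mul_nonsing_inv_cancel_right _ _ h]
  simp only [Matrix.mul_assoc]

end Matrix

theorem stmt4_general {n m : ℕ}
    (M₁ M₂ : Matrix (Fin n) (Fin n) ℝ) (hM₁ : M₁.PosDef) (hM₂ : M₂.PosDef)
    (A : Matrix (Fin n) (Fin n) ℝ) (B : Matrix (Fin n) (Fin m) ℝ)
    (K : Matrix (Fin m) (Fin n) ℝ)
    (β : ℝ)
    (W₁ W₂ : Matrix (Fin n) (Fin n) ℝ) (L : Matrix (Fin m) (Fin n) ℝ)
    (hW₁ : W₁ = M₁⁻¹) (hW₂ : W₂ = M₂⁻¹) (hL : L = K * W₁) :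
    (((1 - β) • M₁) - (A + B * K)ᵀ * M₂ * (A + B * K)).PosDef ↔
    (Matrix.fromBlocks W₂ (A * W₁ + B * L) (A * W₁ + B * L)ᵀ ((1 - β) • W₁)).PosDef := by
  subst hW₁ hW₂ hL
  have := hM₂.inv.isUnit.invertible
  rw [← Matrix.mul_assoc, ← add_mul]
  simp only [← conjTranspose_eq_transpose_of_trivial]
  rw [hM₂.inv.posDef_fromBlocks₁₁_iff, nonsing_inv_nonsing_inv M₂ hM₂.det_pos.ne'.isUnit,
    ← hM₁.isHermitian.star_inv_mul_smul_sub_mul_inv hM₁.det_pos.ne'.isUnit,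
    hM₁.inv.isUnit.posDef_star_left_conjugate_iff]

/-- With `W₁ = M₁⁻¹`, `W₂ = M₂⁻¹` and `L = K W₁`, the contraction condition
`(A + B K)ᵀ M₂ (A + B K) − (1 − β) M₁ ≺ 0` holds if and only if the block matrix
`[[W₂, A W₁ + B L], [(A W₁ + B L)ᵀ, (1 − β) W₁]]` is positive definite. -/
theorem stmt4 {n m : ℕ}
    (M₁ M₂ : Matrix (Fin n) (Fin n) ℝ) (hM₁ : M₁.PosDef) (hM₂ : M₂.PosDef)
    (A : Matrix (Fin n) (Fin n) ℝ) (B : Matrix (Fin n) (Fin m) ℝ)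
    (K : Matrix (Fin m) (Fin n) ℝ)
    (β : ℝ) (hβ0 : 0 < β) (hβ1 : β ≤ 1)
    (W₁ W₂ : Matrix (Fin n) (Fin n) ℝ) (L : Matrix (Fin m) (Fin n) ℝ)
    (hW₁ : W₁ = M₁⁻¹) (hW₂ : W₂ = M₂⁻¹) (hL : L = K * W₁) :
    (((1 - β) • M₁) - (A + B * K)ᵀ * M₂ * (A + B * K)).PosDef ↔
    (Matrix.fromBlocks W₂ (A * W₁ + B * L) (A * W₁ + B * L)ᵀ ((1 - β) • W₁)).PosDef :=
  stmt4_general M₁ M₂ hM₁ hM₂ A B K β W₁ W₂ L hW₁ hW₂ hL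
end

section
/- Let n, m ∈ ℕ, let W : ℝⁿ → Mat_{n×n}(ℝ) assign to each state a symmetric positive definite matrix, and let L : ℝⁿ → Mat_{m×n}(ℝ). Define M(x) := W(x)⁻¹ and K(x) := L(x) W(x)⁻¹. Let 0 < β ≤ 1 and suppose that for all x ∈ ℝⁿ and u ∈ ℝᵐ the block matrix [[W(f(x) + g(x)u), A(x,u) W(x) + B(x) L(x)], [(A(x,u) W(x) + B(x) L(x))ᵀ, (1 − β) W(x)]] is positive definite, where A(x,u) = ∂(f(x) + g(x)u)/∂x and B(x) = g(x). Then M(x) is symmetric positive definite for all x, and for all x, u the closed-loop contraction condition (A(x,u) + B(x) K(x))ᵀ M(f(x)+g(x)u) (A(x,u) + B(x) K(x)) − (1 − β) M(x) ≺ 0 holds. -/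
/-!
With `x⁺ = f(x) + g(x) u`, the Schur complement of the LMI block `W(x⁺)` gives
`(1 - β) W(x) - (A W + B L)ᵀ W(x⁺)⁻¹ (A W + B L) ≻ 0`. Since `A W + B L = (A + B K) W`,
conjugating this by the symmetric matrix `W(x)⁻¹ = M(x)` turns it into the closed-loop
condition `(1 - β) M(x) - (A + B K)ᵀ M(x⁺) (A + B K) ≻ 0`.
-/

open Matrix

namespace Matrix.PosDef

variable {K p q : Type*} [Field K] [PartialOrder K] [StarRing K]
  [Fintype p] [Fintype q] [DecidableEq p] [DecidableEq q]

theorem schur_complement₁₁ {A : Matrix p p K} {B : Matrix p q K} {D : Matrix q q K}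
    (h : (fromBlocks A B Bᴴ D).PosDef) : (D - Bᴴ * A⁻¹ * B).PosDef := by
  have hA : A.PosDef := h.submatrix Sum.inl_injective
  have hAA : A * A⁻¹ = 1 := mul_nonsing_inv A ((isUnit_iff_isUnit_det A).mp hA.isUnit)
  -- `P v = (-A⁻¹ B v, v)` minimises the quadratic form in the first block, leaving the Schur form.
  let P : Matrix (p ⊕ q) q K := fromRows (-(A⁻¹ * B)) 1
  have hP : Function.Injective P.mulVec := fun v w hvw => by
    simpa [P, fromRows_mulVec] using congrArg (· ∘ Sum.inr) hvw
  have hPFP : Pᴴ * fromBlocks A B Bᴴ D * P = D - Bᴴ * A⁻¹ * B := by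
    rw [Matrix.mul_assoc, fromBlocks_mul_fromRows, conjTranspose_fromRows_eq_fromCols_conjTranspose,
      fromCols_mul_fromRows, Matrix.mul_neg, ← Matrix.mul_assoc, hAA]
    simp [Matrix.mul_assoc, sub_eq_neg_add]
  exact hPFP ▸ h.conjTranspose_mul_mul_same hP

theorem smul_inv_sub_of_fromBlocks {W W' C : Matrix p p K} {c : K} (hW : W.PosDef)
    (h : (fromBlocks W' (C * W) (C * W)ᴴ (c • W)).PosDef) :
    (c • W⁻¹ - Cᴴ * W'⁻¹ * C).PosDef := by
  have hWW : W * W⁻¹ = 1 := mul_nonsing_inv W ((isUnit_iff_isUnit_det W).mp hW.isUnit)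
  have hWW' : W⁻¹ * W = 1 := nonsing_inv_mul W ((isUnit_iff_isUnit_det W).mp hW.isUnit)
  have hconj : star W⁻¹ * (c • W - (C * W)ᴴ * W'⁻¹ * (C * W)) * W⁻¹
      = c • W⁻¹ - Cᴴ * W'⁻¹ * C := by
    rw [star_eq_conjTranspose, conjTranspose_nonsing_inv, hW.isHermitian.eq, conjTranspose_mul,
      hW.isHermitian.eq]
    simp only [Matrix.mul_sub, Matrix.sub_mul, Matrix.mul_smul, Matrix.smul_mul, ← Matrix.mul_assoc,
      hWW', Matrix.one_mul]
    simp only [Matrix.mul_assoc, hWW, Matrix.mul_one]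
  rw [← hconj]
  exact (IsUnit.posDef_star_left_conjugate_iff hW.inv.isUnit).mpr h.schur_complement₁₁

end Matrix.PosDef

theorem stmt7_general {n m : ℕ}
    (f : (Fin n → ℝ) → (Fin n → ℝ))
    (g : (Fin n → ℝ) → Matrix (Fin n) (Fin m) ℝ)
    (A : (Fin n → ℝ) → (Fin m → ℝ) → Matrix (Fin n) (Fin n) ℝ)
    (W : (Fin n → ℝ) → Matrix (Fin n) (Fin n) ℝ) (hW : ∀ x, (W x).PosDef)
    (L : (Fin n → ℝ) → Matrix (Fin m) (Fin n) ℝ)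
    (M : (Fin n → ℝ) → Matrix (Fin n) (Fin n) ℝ) (hM : ∀ x, M x = (W x)⁻¹)
    (K : (Fin n → ℝ) → Matrix (Fin m) (Fin n) ℝ) (hK : ∀ x, K x = L x * (W x)⁻¹)
    (β : ℝ)
    (hLMI : ∀ (x : Fin n → ℝ) (u : Fin m → ℝ),
      (Matrix.fromBlocks (W (f x + (g x).mulVec u))
        (A x u * W x + g x * L x) (A x u * W x + g x * L x)ᵀ ((1 - β) • W x)).PosDef) :
    (∀ x, (M x).PosDef) ∧
    (∀ (x : Fin n → ℝ) (u : Fin m → ℝ),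
      (((1 - β) • M x) - (A x u + g x * K x)ᵀ * M (f x + (g x).mulVec u) *
        (A x u + g x * K x)).PosDef) := by
  refine ⟨fun x => hM x ▸ (hW x).inv, fun x u => ?_⟩
  have hWW : (W x)⁻¹ * W x = 1 := nonsing_inv_mul _ ((isUnit_iff_isUnit_det _).mp (hW x).isUnit)
  have hclosed : (A x u + g x * K x) * W x = A x u * W x + g x * L x := by
    rw [hK, Matrix.add_mul, Matrix.mul_assoc, Matrix.mul_assoc, hWW, Matrix.mul_one]
  have hdual := (hW x).smul_inv_sub_of_fromBlocks (W' := W (f x + (g x).mulVec u))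
    (by rw [hclosed, conjTranspose_eq_transpose_of_trivial]; exact hLMI x u)
  rwa [conjTranspose_eq_transpose_of_trivial, ← hM, ← hM] at hdual

/-- controller reconstruction, Theorem 2: If the dual pair `(W, L)`, with
`W(x)` symmetric positive definite, satisfies the LMI
`[[W(f(x)+g(x)u), A(x,u)W(x)+B(x)L(x)], [(A(x,u)W(x)+B(x)L(x))ᵀ, (1−β)W(x)]] ≻ 0` for
all `x, u` (where `A(x,u) = ∂(f(x)+g(x)u)/∂x` and `B(x) = g(x)`), then `M(x) := W(x)⁻¹`
is symmetric positive definite and, with `K(x) := L(x) W(x)⁻¹`, the closed-loop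
contraction condition
`(A + B K)ᵀ M(f(x)+g(x)u) (A + B K) − (1 − β) M(x) ≺ 0` holds for all `x, u`. -/
theorem stmt7 {n m : ℕ}
    (f : (Fin n → ℝ) → (Fin n → ℝ))
    (g : (Fin n → ℝ) → Matrix (Fin n) (Fin m) ℝ)
    (A : (Fin n → ℝ) → (Fin m → ℝ) → Matrix (Fin n) (Fin n) ℝ)
    (hA : ∀ (x : Fin n → ℝ) (u : Fin m → ℝ),
      HasFDerivAt (fun y => f y + (g y).mulVec u)
        (LinearMap.toContinuousLinearMap (Matrix.mulVecLin (A x u))) x)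
    (W : (Fin n → ℝ) → Matrix (Fin n) (Fin n) ℝ) (hW : ∀ x, (W x).PosDef)
    (L : (Fin n → ℝ) → Matrix (Fin m) (Fin n) ℝ)
    (M : (Fin n → ℝ) → Matrix (Fin n) (Fin n) ℝ) (hM : ∀ x, M x = (W x)⁻¹)
    (K : (Fin n → ℝ) → Matrix (Fin m) (Fin n) ℝ) (hK : ∀ x, K x = L x * (W x)⁻¹)
    (β : ℝ) (hβ0 : 0 < β) (hβ1 : β ≤ 1)
    (hLMI : ∀ (x : Fin n → ℝ) (u : Fin m → ℝ),
      (Matrix.fromBlocks (W (f x + (g x).mulVec u))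
        (A x u * W x + g x * L x) (A x u * W x + g x * L x)ᵀ ((1 - β) • W x)).PosDef) :
    (∀ x, (M x).PosDef) ∧
    (∀ (x : Fin n → ℝ) (u : Fin m → ℝ),
      (((1 - β) • M x) - (A x u + g x * K x)ᵀ * M (f x + (g x).mulVec u) *
        (A x u + g x * K x)).PosDef) :=
  stmt7_general f g A W hW L M hM K hK β hLMI
end

section
/- Let n, m ∈ ℕ, f : ℝⁿ → ℝⁿ and g : ℝⁿ → Mat_{n×m}(ℝ) smooth, with differential-dynamics Jacobians A(x,u) = ∂(f(x)+g(x)u)/∂x and B(x) = g(x). Let W : ℝⁿ → Mat_{n×n}(ℝ) assign symmetric positive definite matrices, L : ℝⁿ → Mat_{m×n}(ℝ), and 0 < β ≤ 1, and suppose the block matrix [[W(f(x)+g(x)u), A(x,u)W(x) + B(x)L(x)], [(A(x,u)W(x) + B(x)L(x))ᵀ, (1 − β)W(x)]] is positive definite for all x ∈ ℝⁿ, u ∈ ℝᵐ. Let x : ℕ → ℝⁿ, u : ℕ → ℝᵐ be any closed-loop trajectory with x_{k+1} = f(x_k) + g(x_k) u_k, and let δ : ℕ → ℝⁿ satisfy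 the closed-loop differential dynamics δ_{k+1} = (A(x_k,u_k) + B(x_k) K(x_k)) δ_k, where K(x) := L(x) W(x)⁻¹. Then with M(x) := W(x)⁻¹, the generalized squared distance V_k := δ_kᵀ M(x_k) δ_k satisfies V_k ≤ (1 − β)^k V_0 for all k ∈ ℕ. -/
/-!
Write `b = W(x_k)⁻¹ δ_k` and `N = A W(x_k) + B L(x_k)`. Since `K = L W⁻¹`, the closed-loop
differential step is `δ_{k+1} = N b`, and `x_{k+1} = f(x_k) + g(x_k) u_k` puts the LMI at
the upper left block `W(x_{k+1})`. The Schur complement of that block is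
`(1 − β) W(x_k) − Nᵀ W(x_{k+1})⁻¹ N ⪰ 0`; evaluated at `b` it reads `V_{k+1} ≤ (1 − β) V_k`,
and iterating gives the geometric bound.
-/

open Matrix

theorem Matrix.PosSemidef.star_mulVec_dotProduct_inv_mulVec_le
    {ι κ R : Type*} [Fintype ι] [Fintype κ] [DecidableEq ι]
    [Field R] [PartialOrder R] [StarRing R] [StarOrderedRing R]
    {P : Matrix ι ι R} (N : Matrix ι κ R) (Q : Matrix κ κ R) (hP : P.PosDef)
    (h : (fromBlocks P N Nᴴ Q).PosSemidef) (b : κ → R) :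
    star (N *ᵥ b) ⬝ᵥ (P⁻¹ *ᵥ (N *ᵥ b)) ≤ star b ⬝ᵥ (Q *ᵥ b) := by
  have := hP.isUnit.invertible
  have hSchur := ((hP.fromBlocks₁₁ N Q).1 h).dotProduct_mulVec_nonneg b
  rwa [sub_mulVec, dotProduct_sub, sub_nonneg, ← mulVec_mulVec, ← mulVec_mulVec,
    dotProduct_mulVec (star b), vecMul_conjTranspose, star_star] at hSchur

theorem dotProduct_inv_mulVec_closedLoop_le {ι κ : Type*} [Fintype ι] [Fintype κ] [DecidableEq ι]
    {W W' : Matrix ι ι ℝ} (A : Matrix ι ι ℝ) (B : Matrix ι κ ℝ) (L : Matrix κ ι ℝ) (c : ℝ)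
    (hW : W.PosDef) (hW' : W'.PosDef)
    (hLMI : (fromBlocks W' (A * W + B * L) (A * W + B * L)ᵀ (c • W)).PosSemidef) (δ : ι → ℝ) :
    ((A + B * (L * W⁻¹)) *ᵥ δ) ⬝ᵥ (W'⁻¹ *ᵥ ((A + B * (L * W⁻¹)) *ᵥ δ)) ≤
      c * (δ ⬝ᵥ (W⁻¹ *ᵥ δ)) := by
  have hdet := (isUnit_iff_isUnit_det W).1 hW.isUnit
  have hclosed : A + B * (L * W⁻¹) = (A * W + B * L) * W⁻¹ := by
    rw [add_mul, mul_nonsing_inv_cancel_right _ _ hdet, Matrix.mul_assoc]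
  have hWb : W *ᵥ (W⁻¹ *ᵥ δ) = δ := by
    rw [mulVec_mulVec, mul_nonsing_inv _ hdet, one_mulVec]
  have := hLMI.star_mulVec_dotProduct_inv_mulVec_le _ _ hW' (W⁻¹ *ᵥ δ)
  rwa [star_trivial, star_trivial, smul_mulVec, hWb, dotProduct_smul, smul_eq_mul,
    dotProduct_comm (W⁻¹ *ᵥ δ), mulVec_mulVec, ← hclosed] at this

theorem stmt8_general {n m : ℕ}
    (f : (Fin n → ℝ) → (Fin n → ℝ))
    (g : (Fin n → ℝ) → Matrix (Fin n) (Fin m) ℝ)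
    (A : (Fin n → ℝ) → (Fin m → ℝ) → Matrix (Fin n) (Fin n) ℝ)
    (W : (Fin n → ℝ) → Matrix (Fin n) (Fin n) ℝ) (hW : ∀ x, (W x).PosDef)
    (L : (Fin n → ℝ) → Matrix (Fin m) (Fin n) ℝ)
    (β : ℝ) (hβ1 : β ≤ 1)
    (hLMI : ∀ (x : Fin n → ℝ) (u : Fin m → ℝ),
      (Matrix.fromBlocks (W (f x + (g x).mulVec u))
        (A x u * W x + g x * L x) (A x u * W x + g x * L x)ᵀ ((1 - β) • W x)).PosDef)
    (K : (Fin n → ℝ) → Matrix (Fin m) (Fin n) ℝ) (hK : ∀ x, K x = L x * (W x)⁻¹)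
    (M : (Fin n → ℝ) → Matrix (Fin n) (Fin n) ℝ) (hM : ∀ x, M x = (W x)⁻¹)
    (x : ℕ → Fin n → ℝ) (u : ℕ → Fin m → ℝ)
    (hx : ∀ k, x (k + 1) = f (x k) + (g (x k)).mulVec (u k))
    (δ : ℕ → Fin n → ℝ)
    (hδ : ∀ k, δ (k + 1) = (A (x k) (u k) + g (x k) * K (x k)).mulVec (δ k))
    (V : ℕ → ℝ)
    (hV : ∀ k, V k = δ k ⬝ᵥ (M (x k)).mulVec (δ k)) :
    ∀ k, V k ≤ (1 - β) ^ k * V 0 := by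
  intro k
  refine le_geom (sub_nonneg.2 hβ1) k fun j _ => ?_
  rw [hV, hV, hδ, hM, hM, hK, hx]
  exact dotProduct_inv_mulVec_closedLoop_le _ _ _ _ (hW _) (hW _) (hLMI _ _).posSemidef _

/-- Lemma 1 + Theorem 2 combined: If the dual pair `(W, L)`, with `W(x)`
symmetric positive definite, satisfies the LMI
`[[W(f(x)+g(x)u), A(x,u)W(x)+B(x)L(x)], [(A(x,u)W(x)+B(x)L(x))ᵀ, (1−β)W(x)]] ≻ 0` for
all `x, u` (with `A(x,u) = ∂(f(x)+g(x)u)/∂x`, `B(x) = g(x)`), then along any closed-loop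
trajectory `x_{k+1} = f(x_k) + g(x_k) u_k` with closed-loop differential dynamics
`δ_{k+1} = (A(x_k,u_k) + B(x_k) K(x_k)) δ_k`, `K(x) = L(x) W(x)⁻¹`, the generalized
squared distance `V_k = δ_kᵀ M(x_k) δ_k` with `M(x) = W(x)⁻¹` satisfies
`V_k ≤ (1 − β)^k V_0`. -/
theorem stmt8 {n m : ℕ}
    (f : (Fin n → ℝ) → (Fin n → ℝ))
    (g : (Fin n → ℝ) → Matrix (Fin n) (Fin m) ℝ)
    (A : (Fin n → ℝ) → (Fin m → ℝ) → Matrix (Fin n) (Fin n) ℝ)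
    (hA : ∀ (x : Fin n → ℝ) (u : Fin m → ℝ),
      HasFDerivAt (fun y => f y + (g y).mulVec u)
        (LinearMap.toContinuousLinearMap (Matrix.mulVecLin (A x u))) x)
    (W : (Fin n → ℝ) → Matrix (Fin n) (Fin n) ℝ) (hW : ∀ x, (W x).PosDef)
    (L : (Fin n → ℝ) → Matrix (Fin m) (Fin n) ℝ)
    (β : ℝ) (hβ0 : 0 < β) (hβ1 : β ≤ 1)
    (hLMI : ∀ (x : Fin n → ℝ) (u : Fin m → ℝ),
      (Matrix.fromBlocks (W (f x + (g x).mulVec u))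
        (A x u * W x + g x * L x) (A x u * W x + g x * L x)ᵀ ((1 - β) • W x)).PosDef)
    (K : (Fin n → ℝ) → Matrix (Fin m) (Fin n) ℝ) (hK : ∀ x, K x = L x * (W x)⁻¹)
    (M : (Fin n → ℝ) → Matrix (Fin n) (Fin n) ℝ) (hM : ∀ x, M x = (W x)⁻¹)
    (x : ℕ → Fin n → ℝ) (u : ℕ → Fin m → ℝ)
    (hx : ∀ k, x (k + 1) = f (x k) + (g (x k)).mulVec (u k))
    (δ : ℕ → Fin n → ℝ)
    (hδ : ∀ k, δ (k + 1) = (A (x k) (u k) + g (x k) * K (x k)).mulVec (δ k))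
    (V : ℕ → ℝ)
    (hV : ∀ k, V k = δ k ⬝ᵥ (M (x k)).mulVec (δ k)) :
    ∀ k, V k ≤ (1 - β) ^ k * V 0 :=
  stmt8_general f g A W hW L β hβ1 hLMI K hK M hM x u hx δ hδ V hV
end
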